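/- Let r(z₁,z₂,z₃) = Re(z₁) + |z₂|²·Re(z₂² − z₃³) + |z₃|²·Re(z₃²) − Re(z₂²·conj(z₃)). Suppose γ(t) = (0, γ²(t), γ³(t)) is holomorphic with γ(0) = 0, (γ²)'(0) ≠ 0, and (γ³)'(0) = 0. Then the coefficient of t³·conj(t) in the Taylor expansion of r∘γ at 0 is nonzero; in particular r∘γ vanishes to order at most 4 at 0. -/

import Mathlib

open Complex Filter Topology

/-- Wirtinger derivative ∂/∂t of a function of one complex variable. -/
noncomputable def wd (f : ℂ → ℂ) : ℂ → ℂ := fun t =>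
  (fderiv ℝ f t 1 - Complex.I * fderiv ℝ f t Complex.I) / 2

/-- Wirtinger derivative ∂/∂t̄ of a function of one complex variable. -/
noncomputable def wdbar (f : ℂ → ℂ) : ℂ → ℂ := fun t =>
  (fderiv ℝ f t 1 + Complex.I * fderiv ℝ f t Complex.I) / 2

/-- D^{a,b}[f] = (∂/∂t)^a (∂/∂t̄)^b f. -/
noncomputable def Dab (a b : ℕ) (f : ℂ → ℂ) : ℂ → ℂ := wd^[a] (wdbar^[b] f)

noncomputable def rDef (z₁ z₂ z₃ : ℂ) : ℝ :=
  z₁.re + ‖z₂‖ ^ 2 * (z₂ ^ 2 - z₃ ^ 3).re + ‖z₃‖ ^ 2 * (z₃ ^ 2).re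
    - (z₂ ^ 2 * (starRingEnd ℂ) z₃).re

/-!
Near `0` every term of `r ∘ γ` has the form `Re (g · conj h)` with `g`, `h` holomorphic. On a finite
sum `∑ gᵢ · conj hᵢ` the Wirtinger derivative `∂` only differentiates the `gᵢ` and `∂̄` only the
`hᵢ`, so `D^{a,b}` at `0` equals `∑ gᵢ^{(a)}(0) · conj (hᵢ^{(b)}(0))`. With
`r(0, z₂, z₃) = Re(z₂³ z̄₂) - Re(z₂ z₃³ z̄₂) + Re(z₃³ z̄₃) - Re(z₂² z̄₃)`, `γ² = t u` and
`γ³ = t² v`, only `Re(z₂³ z̄₂)` contributes to `D^{3,1}`, which is `3 a³ ā` with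
`a = u(0) = (γ²)'(0) ≠ 0`.
-/

open ComplexConjugate

section IteratedDeriv

variable {𝕜 : Type*} [NontriviallyNormedField 𝕜]

lemma iteratedDeriv_pow_mul_zero {w : 𝕜 → 𝕜} {k m : ℕ} (hw : ContDiffAt 𝕜 k w 0)
    (hkm : k ≤ m) :
    iteratedDeriv k (fun z => z ^ m * w z) 0 = if k = m then m.factorial * w 0 else 0 := by
  rw [iteratedDeriv_fun_mul (by fun_prop) hw]
  simp only [iteratedDeriv_fun_pow_zero]
  split_ifs with hk
  · subst hk
    rw [Finset.sum_eq_single k (fun i _ hik => by simp [hik]) (by simp)]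
    simp
  · refine Finset.sum_eq_zero fun i hi => ?_
    have : i ≠ m := by simp only [Finset.mem_range] at hi; omega
    simp [this]

lemma iteratedDeriv_eq_zero_of_eventuallyEq_pow_mul {f w : 𝕜 → 𝕜} {k m : ℕ}
    (hw : ContDiffAt 𝕜 k w 0) (hf : f =ᶠ[𝓝 0] fun z => z ^ m * w z) (hkm : k < m) :
    iteratedDeriv k f 0 = 0 := by
  rw [hf.iteratedDeriv_eq, iteratedDeriv_pow_mul_zero hw hkm.le, if_neg hkm.ne]

lemma iteratedDeriv_eq_factorial_mul_of_eventuallyEq_pow_mul {f w : 𝕜 → 𝕜} {m : ℕ}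
    (hw : ContDiffAt 𝕜 m w 0) (hf : f =ᶠ[𝓝 0] fun z => z ^ m * w z) :
    iteratedDeriv m f 0 = m.factorial * w 0 := by
  rw [hf.iteratedDeriv_eq, iteratedDeriv_pow_mul_zero hw le_rfl, if_pos rfl]

lemma AnalyticAt.exists_eventuallyEq_pow_mul [CharZero 𝕜] [CompleteSpace 𝕜] {f : 𝕜 → 𝕜}
    {n : ℕ} (hf : AnalyticAt 𝕜 f 0) (h : ∀ i < n, iteratedDeriv i f 0 = 0) :
    ∃ u, AnalyticAt 𝕜 u 0 ∧ f =ᶠ[𝓝 0] fun z => z ^ n * u z := by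
  obtain ⟨u, hu, hfu⟩ := (natCast_le_analyticOrderAt hf).1
    ((natCast_le_analyticOrderAt_iff_iteratedDeriv_eq_zero hf).2 h)
  exact ⟨u, hu, by simpa [Filter.EventuallyEq] using hfu⟩

lemma AnalyticAt.iteratedDeriv [CompleteSpace 𝕜] {f : 𝕜 → 𝕜} {x : 𝕜} (hf : AnalyticAt 𝕜 f x)
    (n : ℕ) : AnalyticAt 𝕜 (iteratedDeriv n f) x := by
  rw [iteratedDeriv_eq_iterate]
  exact hf.iterated_deriv n

end IteratedDeriv

section Wirtinger

lemma wd_eq_of_hasFDerivAt {f : ℂ → ℂ} {t α β : ℂ}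
    (hf : HasFDerivAt f (α • ContinuousLinearMap.id ℝ ℂ + β • conjCLE.toContinuousLinearMap) t) :
    wd f t = α := by
  simp only [wd, hf.fderiv, add_apply, smul_apply,
    ContinuousLinearMap.id_apply, ContinuousLinearEquiv.coe_coe, ContinuousAlgEquiv.coeCLE_apply,
    conjCAE_apply, smul_eq_mul, mul_one, map_one, conj_I]
  ring_nf
  rw [I_sq]
  ring

lemma wdbar_eq_of_hasFDerivAt {f : ℂ → ℂ} {t α β : ℂ}
    (hf : HasFDerivAt f (α • ContinuousLinearMap.id ℝ ℂ + β • conjCLE.toContinuousLinearMap) t) :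
    wdbar f t = β := by
  simp only [wdbar, hf.fderiv, add_apply, smul_apply,
    ContinuousLinearMap.id_apply, ContinuousLinearEquiv.coe_coe, ContinuousAlgEquiv.coeCLE_apply,
    conjCAE_apply, smul_eq_mul, mul_one, map_one, conj_I]
  ring_nf
  rw [I_sq]
  ring

lemma wd_congr {f g : ℂ → ℂ} {x : ℂ} (h : f =ᶠ[𝓝 x] g) : wd f =ᶠ[𝓝 x] wd g := by
  filter_upwards [h.fderiv (𝕜 := ℝ)] with t ht
  simp only [wd, ht]

lemma wdbar_congr {f g : ℂ → ℂ} {x : ℂ} (h : f =ᶠ[𝓝 x] g) : wdbar f =ᶠ[𝓝 x] wdbar g := by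
  filter_upwards [h.fderiv (𝕜 := ℝ)] with t ht
  simp only [wdbar, ht]

lemma hasFDerivAt_mul_conj {g h : ℂ → ℂ} {t : ℂ} (hg : DifferentiableAt ℂ g t)
    (hh : DifferentiableAt ℂ h t) :
    HasFDerivAt (fun s => g s * conj (h s))
      ((deriv g t * conj (h t)) • ContinuousLinearMap.id ℝ ℂ +
        (g t * conj (deriv h t)) • conjCLE.toContinuousLinearMap) t := by
  have hg' := hg.hasDerivAt.hasFDerivAt.restrictScalars ℝ
  have hh' := (conjCLE.toContinuousLinearMap.hasFDerivAt).comp t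
    (hh.hasDerivAt.hasFDerivAt.restrictScalars ℝ)
  refine (hg'.mul hh').congr_fderiv ?_
  ext v
  simp only [ContinuousLinearEquiv.coe_coe, ContinuousAlgEquiv.coe_coeCLE, Function.comp_apply,
    conjCAE_apply, add_apply, smul_apply,
    ContinuousLinearMap.comp_apply, ContinuousLinearMap.coe_restrictScalars',
    ContinuousLinearMap.toSpanSingleton_apply, smul_eq_mul, ContinuousAlgEquiv.coeCLE_apply, map_mul,
    ContinuousLinearMap.id_apply]
  ring

variable {ι : Type*} [Fintype ι]

def sumMulConj (g h : ι → ℂ → ℂ) : ℂ → ℂ := fun t => ∑ i, g i t * conj (h i t)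

variable {g h : ι → ℂ → ℂ}

lemma hasFDerivAt_sumMulConj {t : ℂ} (hg : ∀ i, DifferentiableAt ℂ (g i) t)
    (hh : ∀ i, DifferentiableAt ℂ (h i) t) :
    HasFDerivAt (sumMulConj g h)
      (sumMulConj (fun i => deriv (g i)) h t • ContinuousLinearMap.id ℝ ℂ +
        sumMulConj g (fun i => deriv (h i)) t • conjCLE.toContinuousLinearMap) t := by
  have := HasFDerivAt.fun_sum (u := Finset.univ) fun i _ => hasFDerivAt_mul_conj (hg i) (hh i)
  simp only [Finset.sum_add_distrib, ← Finset.sum_smul] at this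
  exact this

lemma wd_iterate_sumMulConj {x : ℂ} {F : ℂ → ℂ} (hF : F =ᶠ[𝓝 x] sumMulConj g h)
    (hg : ∀ i, AnalyticAt ℂ (g i) x) (hh : ∀ i, AnalyticAt ℂ (h i) x) (a : ℕ) :
    wd^[a] F =ᶠ[𝓝 x] sumMulConj (fun i => iteratedDeriv a (g i)) h := by
  induction a with
  | zero => simpa using hF
  | succ a ih =>
    filter_upwards [wd_congr ih,
      eventually_all.2 fun i => ((hg i).iteratedDeriv a).eventually_analyticAt,
      eventually_all.2 fun i => (hh i).eventually_analyticAt] with t ht hgt hht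
    rw [Function.iterate_succ_apply', ht, wd_eq_of_hasFDerivAt (hasFDerivAt_sumMulConj
      (fun i => (hgt i).differentiableAt) fun i => (hht i).differentiableAt)]
    simp only [iteratedDeriv_succ]

lemma wdbar_iterate_sumMulConj {x : ℂ} {F : ℂ → ℂ} (hF : F =ᶠ[𝓝 x] sumMulConj g h)
    (hg : ∀ i, AnalyticAt ℂ (g i) x) (hh : ∀ i, AnalyticAt ℂ (h i) x) (b : ℕ) :
    wdbar^[b] F =ᶠ[𝓝 x] sumMulConj g (fun i => iteratedDeriv b (h i)) := by
  induction b with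
  | zero => simpa using hF
  | succ b ih =>
    filter_upwards [wdbar_congr ih,
      eventually_all.2 fun i => (hg i).eventually_analyticAt,
      eventually_all.2 fun i => ((hh i).iteratedDeriv b).eventually_analyticAt] with t ht hgt hht
    rw [Function.iterate_succ_apply', ht, wdbar_eq_of_hasFDerivAt (hasFDerivAt_sumMulConj
      (fun i => (hgt i).differentiableAt) fun i => (hht i).differentiableAt)]
    simp only [iteratedDeriv_succ]

lemma Dab_sumMulConj {x : ℂ} (hg : ∀ i, AnalyticAt ℂ (g i) x) (hh : ∀ i, AnalyticAt ℂ (h i) x)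
    (a b : ℕ) :
    Dab a b (sumMulConj g h) x = ∑ i, iteratedDeriv a (g i) x * conj (iteratedDeriv b (h i) x) :=
  (wd_iterate_sumMulConj (wdbar_iterate_sumMulConj (by rfl) hg hh b) hg
    (fun i => (hh i).iteratedDeriv b) a).eq_of_nhds

lemma Dab_sum_re_mul_conj {x : ℂ} (hg : ∀ i, AnalyticAt ℂ (g i) x)
    (hh : ∀ i, AnalyticAt ℂ (h i) x) (a b : ℕ) :
    Dab a b (fun t => ((∑ i, (g i t * conj (h i t)).re : ℝ) : ℂ)) x =
      ∑ i, (iteratedDeriv a (g i) x * conj (iteratedDeriv b (h i) x) +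
        iteratedDeriv a (h i) x * conj (iteratedDeriv b (g i) x)) / 2 := by
  have hsum : (fun t => ((∑ i, (g i t * conj (h i t)).re : ℝ) : ℂ)) =
      sumMulConj (Sum.elim (fun i t => g i t / 2) (fun i t => h i t / 2)) (Sum.elim h g) := by
    funext t
    simp only [sumMulConj, Fintype.sum_sum_type, Sum.elim_inl, Sum.elim_inr, ofReal_sum,
      re_eq_add_conj, map_mul, conj_conj, ← Finset.sum_add_distrib]
    exact Finset.sum_congr rfl fun i _ => by ring
  rw [hsum, Dab_sumMulConj (by rintro (i | i) <;> simp [(hg i).div_const, (hh i).div_const])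
    (by rintro (i | i) <;> simp [hg i, hh i]), Fintype.sum_sum_type, ← Finset.sum_add_distrib]
  refine Finset.sum_congr rfl fun i _ => ?_
  simp only [Sum.elim_inl, Sum.elim_inr, iteratedDeriv_div_const]
  ring

end Wirtinger

def holFactor (γ₂ γ₃ : ℂ → ℂ) : Fin 4 → ℂ → ℂ :=
  ![fun t => γ₂ t ^ 3, fun t => -(γ₂ t * γ₃ t ^ 3), fun t => γ₃ t ^ 3, fun t => -γ₂ t ^ 2]

def conjFactor (γ₂ γ₃ : ℂ → ℂ) : Fin 4 → ℂ → ℂ := ![γ₂, γ₂, γ₃, γ₃]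

lemma rDef_comp_eq_sum_re (γ₂ γ₃ : ℂ → ℂ) (t : ℂ) :
    rDef 0 (γ₂ t) (γ₃ t) = ∑ i, (holFactor γ₂ γ₃ i t * conj (conjFactor γ₂ γ₃ i t)).re := by
  apply ofReal_injective
  simp only [Fin.sum_univ_four, holFactor, conjFactor, Matrix.cons_val, rDef, ofReal_add,
    ofReal_sub, ofReal_mul, ofReal_pow, re_eq_add_conj, ← mul_conj', map_sub, map_mul,
    map_neg, map_pow, map_zero, conj_conj]
  ring

lemma Dab_rDef_comp {γ₂ γ₃ : ℂ → ℂ} {x : ℂ} (h₂ : AnalyticAt ℂ γ₂ x) (h₃ : AnalyticAt ℂ γ₃ x)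
    (a b : ℕ) :
    Dab a b (fun t => ((rDef 0 (γ₂ t) (γ₃ t) : ℝ) : ℂ)) x =
      ∑ i, (iteratedDeriv a (holFactor γ₂ γ₃ i) x * conj (iteratedDeriv b (conjFactor γ₂ γ₃ i) x) +
        iteratedDeriv a (conjFactor γ₂ γ₃ i) x * conj (iteratedDeriv b (holFactor γ₂ γ₃ i) x)) /
          2 := by
  have hg : ∀ i, AnalyticAt ℂ (holFactor γ₂ γ₃ i) x := by
    intro i; fin_cases i <;> simp [holFactor] <;> fun_prop
  have hh : ∀ i, AnalyticAt ℂ (conjFactor γ₂ γ₃ i) x := by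
    intro i; fin_cases i <;> simp [conjFactor] <;> assumption
  simp only [← Dab_sum_re_mul_conj hg hh, rDef_comp_eq_sum_re]

lemma Dab_three_one_rDef_comp {γ₂ γ₃ u v : ℂ → ℂ} (hu : AnalyticAt ℂ u 0)
    (hv : AnalyticAt ℂ v 0) (h₂ : γ₂ =ᶠ[𝓝 0] fun z => z ^ 1 * u z)
    (h₃ : γ₃ =ᶠ[𝓝 0] fun z => z ^ 2 * v z) :
    Dab 3 1 (fun t => ((rDef 0 (γ₂ t) (γ₃ t) : ℝ) : ℂ)) 0 = 3 * u 0 ^ 3 * conj (u 0) := by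
  have e₀ : (fun t => γ₂ t ^ 3) =ᶠ[𝓝 0] fun z => z ^ 3 * u z ^ 3 := by
    filter_upwards [h₂] with z hz; rw [hz]; ring
  have e₁ : (fun t => -(γ₂ t * γ₃ t ^ 3)) =ᶠ[𝓝 0] fun z => z ^ 7 * -(u z * v z ^ 3) := by
    filter_upwards [h₂, h₃] with z hz₂ hz₃; rw [hz₂, hz₃]; ring
  have e₂ : (fun t => γ₃ t ^ 3) =ᶠ[𝓝 0] fun z => z ^ 6 * v z ^ 3 := by
    filter_upwards [h₃] with z hz; rw [hz]; ring
  have e₃ : (fun t => -γ₂ t ^ 2) =ᶠ[𝓝 0] fun z => z ^ 2 * -u z ^ 2 := by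
    filter_upwards [h₂] with z hz; rw [hz]; ring
  have d₃g₀ : iteratedDeriv 3 (fun t => γ₂ t ^ 3) 0 = 6 * u 0 ^ 3 := by
    rw [iteratedDeriv_eq_factorial_mul_of_eventuallyEq_pow_mul (hu.pow 3).contDiffAt e₀]
    norm_num [Nat.factorial]
  have d₁γ₂ : iteratedDeriv 1 γ₂ 0 = u 0 := by
    rw [iteratedDeriv_eq_factorial_mul_of_eventuallyEq_pow_mul hu.contDiffAt h₂]
    simp
  have hγ₂ : AnalyticAt ℂ γ₂ 0 := (analyticAt_congr h₂).2 (by fun_prop)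
  have hγ₃ : AnalyticAt ℂ γ₃ 0 := (analyticAt_congr h₃).2 (by fun_prop)
  rw [Dab_rDef_comp hγ₂ hγ₃, Fin.sum_univ_four]
  simp only [holFactor, conjFactor, Matrix.cons_val]
  rw [d₃g₀, d₁γ₂,
    iteratedDeriv_eq_zero_of_eventuallyEq_pow_mul (hu.mul (hv.pow 3)).neg.contDiffAt e₁ (k := 3)
      (by norm_num),
    iteratedDeriv_eq_zero_of_eventuallyEq_pow_mul (hu.pow 3).contDiffAt e₀ (k := 1) (by norm_num),
    iteratedDeriv_eq_zero_of_eventuallyEq_pow_mul (hu.mul (hv.pow 3)).neg.contDiffAt e₁ (k := 1)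
      (by norm_num),
    iteratedDeriv_eq_zero_of_eventuallyEq_pow_mul (hv.pow 3).contDiffAt e₂ (k := 1) (by norm_num),
    iteratedDeriv_eq_zero_of_eventuallyEq_pow_mul (hu.pow 2).neg.contDiffAt e₃ (k := 1)
      (by norm_num),
    iteratedDeriv_eq_zero_of_eventuallyEq_pow_mul hv.contDiffAt h₃ (k := 1) (by norm_num)]
  simp only [map_zero, mul_zero, add_zero, zero_mul, zero_div]
  ring

/-- If γ = (0,γ²,γ³) is holomorphic with γ(0)=0, (γ²)'(0)≠0 and (γ³)'(0)=0, then the coefficient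
of t³t̄ (i.e. D^{3,1}[r∘γ](0)) is nonzero; in particular r∘γ vanishes to order at most 4 at 0. -/
theorem stmt3 (γ₂ γ₃ : ℂ → ℂ) (h₂ : AnalyticAt ℂ γ₂ 0) (h₃ : AnalyticAt ℂ γ₃ 0)
    (h₂0 : γ₂ 0 = 0) (h₃0 : γ₃ 0 = 0) (h₂' : deriv γ₂ 0 ≠ 0) (h₃' : deriv γ₃ 0 = 0) :
    Dab 3 1 (fun t => ((rDef 0 (γ₂ t) (γ₃ t) : ℝ) : ℂ)) 0 ≠ 0 ∧
    (∃ a b : ℕ, a + b ≤ 4 ∧ Dab a b (fun t => ((rDef 0 (γ₂ t) (γ₃ t) : ℝ) : ℂ)) 0 ≠ 0) := by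
  obtain ⟨u, hu, h₂u⟩ := h₂.exists_eventuallyEq_pow_mul (n := 1) (by simpa using h₂0)
  obtain ⟨v, hv, h₃v⟩ := h₃.exists_eventuallyEq_pow_mul (n := 2) fun i hi => by
    interval_cases i
    exacts [h₃0, by simpa using h₃']
  have hu0 : u 0 = deriv γ₂ 0 := by
    rw [← iteratedDeriv_one,
      iteratedDeriv_eq_factorial_mul_of_eventuallyEq_pow_mul hu.contDiffAt h₂u]
    simp
  have hD : Dab 3 1 (fun t => ((rDef 0 (γ₂ t) (γ₃ t) : ℝ) : ℂ)) 0 ≠ 0 := by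
    rw [Dab_three_one_rDef_comp hu hv h₂u h₃v, hu0]
    simp [h₂']
  exact ⟨hD, 3, 1, by norm_num, hD⟩
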